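/- Let 0 < α ≤ π with α ≠ 2π/3. Then there exists ε₀ > 0 such that for every ε with 0 < ε ≤ ε₀ and every finite (ε/4)-net X of the circle S¹, the chromatic number of the ε-distance graph D_{X,ε}(α) equals 3. -/

import Mathlib

/-- The circle `S¹ = ℝ/2πℤ` with its quotient metric. -/
abbrev Circle2 : Type := AddCircle (2 * Real.pi)

instance : Fact (0 < 2 * Real.pi) := ⟨by positivity⟩

/-- `X` is an `r`-net of the circle. -/
def cIsNet (r : ℝ) (X : Set Circle2) : Prop :=
  ∀ y : Circle2, ∃ x ∈ X, dist x y ≤ r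

/-- The ε-distance graph with parameter α on a set `X ⊆ S¹`: distinct points are
adjacent iff their distance lies in `[α - ε, α + ε]`. -/
def cDistGraph (X : Set Circle2) (α ε : ℝ) : SimpleGraph X where
  Adj x y := x ≠ y ∧ α - ε ≤ dist x.1 y.1 ∧ dist x.1 y.1 ≤ α + ε
  symm := ⟨by
    intro x y h
    exact ⟨h.1.symm, by rw [dist_comm]; exact h.2.1, by rw [dist_comm]; exact h.2.2⟩⟩
  loopless := ⟨fun x h => h.1 rfl⟩

/-- The ε-distance graph with parameter α on the whole circle `S¹`. -/
def cDistGraphAll (α ε : ℝ) : SimpleGraph Circle2 where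
  Adj x y := x ≠ y ∧ α - ε ≤ dist x y ∧ dist x y ≤ α + ε
  symm := ⟨by
    intro x y h
    exact ⟨h.1.symm, by rw [dist_comm]; exact h.2.1, by rw [dist_comm]; exact h.2.2⟩⟩
  loopless := ⟨fun x h => h.1 rfl⟩


/-! For the upper bound pick `k` with `ℓ := 2π/(3k)` satisfying `ℓ < α < 2ℓ` (possible exactly
because `α ≠ 2π/3`), cut `S¹` into `3k` arcs of length `ℓ` and colour them cyclically with three
colours: two points of the same colour are at distance `< ℓ` or `> 2ℓ`, so for
`ε ≤ min (α - ℓ) (2ℓ - α)` no edge is monochromatic.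

For the lower bound choose an odd `n` and an integer `m` with `δ := 2πm/n` within `ε/2` of `α`.
The points `i δ`, `i = 0, …, n`, form a closed chain of odd length with all steps at distance
`≈ α`; moving each to a point of the `ε/4`-net within `ε/4` keeps consecutive distances in
`[α - ε, α + ε]`, which gives an odd closed walk in `D_{X,ε}(α)`. -/

open Real

namespace SimpleGraph

variable {V : Type*} {G : SimpleGraph V}

lemma exists_walk_of_adj_succ (v : ℕ → V) :
    ∀ n, (∀ i < n, G.Adj (v i) (v (i + 1))) → ∃ w : G.Walk (v 0) (v n), w.length = n
  | 0, _ => ⟨.nil, rfl⟩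
  | n + 1, h => by
    obtain ⟨w, hw⟩ := exists_walk_of_adj_succ v n fun i hi => h i (by omega)
    exact ⟨w.concat (h n n.lt_succ_self), by rw [Walk.length_concat, hw]⟩

lemma three_le_chromaticNumber_of_odd_closed_chain (v : ℕ → V) {n : ℕ} (hn : Odd n)
    (hadj : ∀ i < n, G.Adj (v i) (v (i + 1))) (hclosed : v n = v 0) :
    3 ≤ G.chromaticNumber := by
  obtain ⟨w, hw⟩ := exists_walk_of_adj_succ v n hadj
  exact (w.copy rfl hclosed).three_le_chromaticNumber_of_odd_loop (by simpa [hw] using hn)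

end SimpleGraph

lemma exists_nat_div_lt_lt_two_mul_div {α c : ℝ} (hα : 0 < α) (hαc : α < 2 * c) (hne : α ≠ c) :
    ∃ k : ℕ, 0 < k ∧ c / k < α ∧ α < 2 * (c / k) := by
  have hc : 0 < c := by linarith
  rcases hne.lt_or_gt with hlt | hgt
  · obtain ⟨hk₁, hk₂⟩ : c / α < ⌊c / α⌋₊ + 1 ∧ (⌊c / α⌋₊ : ℝ) ≤ c / α :=
      ⟨Nat.lt_floor_add_one _, Nat.floor_le (by positivity)⟩
    refine ⟨⌊c / α⌋₊ + 1, Nat.succ_pos _, ?_, ?_⟩ <;> push_cast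
    · rwa [div_lt_iff₀ (by positivity), ← div_lt_iff₀' hα]
    · have hfloor : (⌊c / α⌋₊ : ℝ) * α ≤ c := (le_div_iff₀ hα).mp hk₂
      rw [mul_div_assoc', lt_div_iff₀ (by positivity)]
      nlinarith
  · exact ⟨1, one_pos, by simpa using hgt, by simpa using hαc⟩

lemma exists_int_abs_sub_three_mul_lt {a b : ℝ} (h : (⌊a⌋ : ZMod 3) = ⌊b⌋) :
    ∃ N : ℤ, |a - b - 3 * N| < 1 := by
  obtain ⟨N, hN⟩ := (ZMod.intCast_eq_intCast_iff_dvd_sub _ _ 3).mp h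
  refine ⟨-N, ?_⟩
  have hN' : (⌊b⌋ : ℝ) - ⌊a⌋ = 3 * N := by exact_mod_cast hN
  rw [abs_lt, Int.cast_neg]
  constructor <;> linarith [Int.floor_le a, Int.lt_floor_add_one a, Int.floor_le b,
    Int.lt_floor_add_one b]

lemma abs_lt_or_two_mul_lt_abs {t ℓ : ℝ} {N : ℤ} (h : |t - 3 * ℓ * N| < ℓ) :
    |t| < ℓ ∨ 2 * ℓ < |t| := by
  rw [abs_lt] at h
  rcases lt_trichotomy N 0 with hN | rfl | hN
  · have : (N : ℝ) ≤ -1 := by exact_mod_cast Int.le_sub_one_of_lt hN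
    right; rw [abs_of_neg (by nlinarith)]; nlinarith
  · left; simpa [abs_lt] using h
  · have : (1 : ℝ) ≤ N := by exact_mod_cast hN
    right; rw [abs_of_pos (by nlinarith)]; nlinarith

lemma AddCircle.exists_coloring_zmod_three {p ℓ : ℝ} {k : ℕ} (hℓ : 0 < ℓ) (hp : p = 3 * k * ℓ) :
    ∃ c : AddCircle p → ZMod 3, ∀ x y, c x = c y → dist x y < ℓ ∨ 2 * ℓ < dist x y := by
  -- colour `x` by the index mod 3 of the arc `[jℓ, (j+1)ℓ)` containing it; `p` is `3k` arcs
  have hper : Function.Periodic (fun x : ℝ => (⌊x / ℓ⌋ : ZMod 3)) p := fun x => by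
    have : (x + p) / ℓ = x / ℓ + ((3 * k : ℕ) : ℤ) := by rw [hp]; field_simp; push_cast; ring
    simp only [this, Int.floor_add_intCast, Int.cast_add, Nat.cast_mul]
    simp [show (3 : ZMod 3) = 0 from rfl]
  refine ⟨hper.lift, fun x y hxy => ?_⟩
  induction x using QuotientAddGroup.induction_on
  induction y using QuotientAddGroup.induction_on
  rename_i a b
  rw [hper.lift_coe, hper.lift_coe] at hxy
  obtain ⟨N, hN⟩ := exists_int_abs_sub_three_mul_lt hxy
  rw [dist_eq_norm, ← QuotientAddGroup.mk_sub, AddCircle.norm_eq]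
  apply abs_lt_or_two_mul_lt_abs (N := N - k * round (p⁻¹ * (a - b)))
  have : a - b - round (p⁻¹ * (a - b)) * p - 3 * ℓ * ((N - k * round (p⁻¹ * (a - b)) : ℤ) : ℝ)
      = ℓ * (a / ℓ - b / ℓ - 3 * N) := by
    rw [hp]; field_simp; push_cast; ring
  rw [this, abs_mul, abs_of_pos hℓ]
  exact mul_lt_of_lt_one_right hℓ hN

lemma cDistGraphAll_colorable_three {α ε ℓ : ℝ} {k : ℕ} (hℓ : 0 < ℓ) (hp : 2 * π = 3 * k * ℓ)
    (h₁ : ℓ ≤ α - ε) (h₂ : α + ε ≤ 2 * ℓ) : (cDistGraphAll α ε).Colorable 3 := by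
  obtain ⟨c, hc⟩ := AddCircle.exists_coloring_zmod_three hℓ hp
  refine ⟨.mk c fun {x y} (hxy : x ≠ y ∧ α - ε ≤ dist x y ∧ dist x y ≤ α + ε) hcol => ?_⟩
  rcases hc x y hcol with h | h <;> linarith [hxy.2.1, hxy.2.2]

lemma cDistGraph_colorable_of_colorable_all {X : Set Circle2} {α ε : ℝ} {n : ℕ}
    (h : (cDistGraphAll α ε).Colorable n) : (cDistGraph X α ε).Colorable n :=
  h.of_hom (G := cDistGraph X α ε) ⟨Subtype.val, fun {x y} hxy =>
    show (cDistGraphAll α ε).Adj x y from ⟨Subtype.val_injective.ne hxy.1, hxy.2⟩⟩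

lemma exists_odd_nat_gt (x : ℝ) : ∃ n : ℕ, Odd n ∧ x < n :=
  ⟨2 * ⌈x⌉₊ + 1, odd_two_mul_add_one _, by
    push_cast; linarith [Nat.le_ceil x, Nat.cast_nonneg (α := ℝ) ⌈x⌉₊]⟩

lemma AddCircle.exists_odd_closed_chain {p : ℝ} [Fact (0 < p)] {a ε : ℝ} (ha : 0 ≤ a)
    (hap : a ≤ p / 2) (hε : 0 < ε) :
    ∃ n : ℕ, Odd n ∧ ∃ q : ℕ → AddCircle p, q n = q 0 ∧ ∀ i, |dist (q i) (q (i + 1)) - a| ≤ ε := by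
  have hp : 0 < p := Fact.out
  obtain ⟨n, hn, hpn⟩ := exists_odd_nat_gt (p / ε)
  have hn0 : (0 : ℝ) < n := by exact_mod_cast hn.pos
  set m := round (a * n / p)
  set δ := p * m / n
  have hδa : |δ - a| ≤ ε := by
    have : δ - a = p / n * (m - a * n / p) := by simp only [δ]; field_simp
    rw [this, abs_mul, abs_of_pos (by positivity), abs_sub_comm]
    have : p / n < ε := by rwa [div_lt_iff₀ hn0, ← div_lt_iff₀' hε]
    nlinarith [abs_sub_round (a * n / p), abs_nonneg (a * n / p - m), div_pos hp hn0]
  -- `n δ = p m`, so the chain closes up after the odd number `n` of steps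
  refine ⟨n, hn, fun i => ((i * δ : ℝ) : AddCircle p), ?_, fun i => ?_⟩
  · simp only [Nat.cast_zero, zero_mul, AddCircle.coe_zero, AddCircle.coe_eq_zero_iff]
    exact ⟨m, by simp only [δ, zsmul_eq_mul]; field_simp⟩
  · have hnorm_a : ‖(a : AddCircle p)‖ = a := by
      rw [(AddCircle.norm_coe_eq_abs_iff p hp.ne').mpr, abs_of_nonneg ha]
      rwa [abs_of_nonneg ha, abs_of_pos hp]
    have hdist :
        dist ((i * δ : ℝ) : AddCircle p) (((i + 1 : ℕ) * δ : ℝ)) = ‖(δ : AddCircle p)‖ := by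
      rw [dist_eq_norm, ← AddCircle.coe_sub, ← norm_neg, ← AddCircle.coe_neg]
      push_cast; ring_nf
    calc |dist _ _ - a| = |‖(δ : AddCircle p)‖ - ‖(a : AddCircle p)‖| := by rw [hdist, hnorm_a]
      _ ≤ ‖((δ - a : ℝ) : AddCircle p)‖ := by
        rw [AddCircle.coe_sub]; exact abs_norm_sub_norm_le _ _
      _ ≤ |δ - a| := QuotientAddGroup.norm_mk_le_norm
      _ ≤ ε := hδa

lemma three_le_chromaticNumber_cDistGraph {X : Set Circle2} {α ε : ℝ} (hε : 0 < ε) (hεα : ε < α)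
    (hαπ : α ≤ π) (hX : cIsNet (ε / 4) X) : 3 ≤ (cDistGraph X α ε).chromaticNumber := by
  obtain ⟨n, hn, q, hq, hqdist⟩ :=
    AddCircle.exists_odd_closed_chain (p := 2 * π) (a := α) (hε.trans hεα).le (by linarith)
      (half_pos hε)
  choose P hPX hPq using hX
  refine SimpleGraph.three_le_chromaticNumber_of_odd_closed_chain (fun i => ⟨P (q i), hPX _⟩) hn
    (fun i _ => ?_) (by simp only [hq])
  have hd : |dist (P (q i)) (P (q (i + 1))) - α| ≤ ε := by
    have := dist_dist_dist_le (P (q i)) (P (q (i + 1))) (q i) (q (i + 1))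
    rw [Real.dist_eq] at this
    linarith [abs_sub_le (dist (P (q i)) (P (q (i + 1)))) (dist (q i) (q (i + 1))) α, hqdist i,
      hPq (q i), hPq (q (i + 1))]
  obtain ⟨h₁, h₂⟩ := abs_sub_le_iff.mp hd
  refine ⟨fun h => ?_, by linarith, by linarith⟩
  rw [Subtype.mk.injEq] at h
  rw [h, dist_self] at h₂
  linarith

/-- for `0 < α ≤ π`, `α ≠ 2π/3`, the ε-distance graph on any finite
`(ε/4)`-net of `S¹` has chromatic number exactly `3` for all small `ε > 0`. -/
theorem stmt_12 (α : ℝ) (hα0 : 0 < α) (hαπ : α ≤ Real.pi) (hα23 : α ≠ 2 * Real.pi / 3) :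
    ∃ ε₀ > (0 : ℝ), ∀ ε : ℝ, 0 < ε → ε ≤ ε₀ →
      ∀ X : Set Circle2, X.Finite → cIsNet (ε / 4) X →
        (cDistGraph X α ε).chromaticNumber = 3 := by
  obtain ⟨k, hk, hℓα, hαℓ⟩ := exists_nat_div_lt_lt_two_mul_div hα0 (by linarith [pi_pos]) hα23
  set ℓ := 2 * π / 3 / k
  have hℓ : 0 < ℓ := by positivity
  have hp : 2 * π = 3 * k * ℓ := by simp only [ℓ]; field_simp
  refine ⟨min (α - ℓ) (2 * ℓ - α), lt_min (by linarith) (by linarith), fun ε hε hε₀ X _ hX => ?_⟩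
  have h₁ : ℓ ≤ α - ε := by linarith [min_le_left (α - ℓ) (2 * ℓ - α)]
  have h₂ : α + ε ≤ 2 * ℓ := by linarith [min_le_right (α - ℓ) (2 * ℓ - α)]
  refine le_antisymm ?_ (three_le_chromaticNumber_cDistGraph hε (by linarith) hαπ hX)
  exact_mod_cast (cDistGraph_colorable_of_colorable_all
    (cDistGraphAll_colorable_three hℓ hp h₁ h₂)).chromaticNumber_le
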